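/- Let X and Y be uncorrelated centered real random variables with Var[X] + Var[Y] = 1, Var[X] > 0, and let N be standard normal. Then d_K(X + Y, N) ≤ d_K(X/√Var[X], N) + 3·(Var[Y])^{1/3}. -/

import Mathlib

open MeasureTheory ProbabilityTheory

/-- Kolmogorov distance between (the laws of) two real random variables. -/
noncomputable def dK {Ω : Type*} [MeasurableSpace Ω] (μ : Measure Ω) (X Y : Ω → ℝ) : ℝ :=
  ⨆ t : ℝ, |(μ {ω | X ω ≤ t}).toReal - (μ {ω | Y ω ≤ t}).toReal|

/-!
Let `σ = √Var X` and `Var Y = a³`. Since `X + Y ≤ t` forces `X ≤ t + ε` unless `|Y| ≥ ε` (and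
symmetrically), Chebyshev compares the law of `X + Y` with `s ↦ Φ (s / σ)` up to
`dK(X/σ, N) + a³/ε² + (2/5) ε/σ`, the last term because the standard normal density is bounded by
`1/√(2π) < 2/5`. Replacing `Φ (t / σ)` by `Φ t` costs `(2/5)(1 - σ)/σ`, because `|t| φ(t) ≤ 2/5`.
For `a ≤ 1/3` we have `1 - σ ≤ 1 - σ² = a³`, and `ε ↓ a` gives the bound `3a`; for `a > 1/3` the
claim is trivial as `3a > 1`.
-/

open Real Set

local notation "Φ" => cdf (gaussianReal 0 1)

section KolmogorovDistance

variable {Ω : Type*} [MeasurableSpace Ω] {μ : Measure Ω}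

lemma abs_measureReal_sub_le_one [IsProbabilityMeasure μ] (A B : Set Ω) :
    |μ.real A - μ.real B| ≤ 1 :=
  (abs_sub_le_of_le_of_le measureReal_nonneg measureReal_le_one measureReal_nonneg
    measureReal_le_one).trans_eq (sub_zero 1)

lemma dK_nonneg (μ : Measure Ω) (X Y : Ω → ℝ) : 0 ≤ dK μ X Y :=
  Real.iSup_nonneg fun _ => abs_nonneg _

lemma abs_sub_le_dK [IsProbabilityMeasure μ] (X Y : Ω → ℝ) (t : ℝ) :
    |μ.real {ω | X ω ≤ t} - μ.real {ω | Y ω ≤ t}| ≤ dK μ X Y :=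
  le_ciSup (f := fun t => |μ.real {ω | X ω ≤ t} - μ.real {ω | Y ω ≤ t}|)
    ⟨1, by rintro _ ⟨s, rfl⟩; exact abs_measureReal_sub_le_one _ _⟩ t

lemma dK_le {X Y : Ω → ℝ} {c : ℝ}
    (h : ∀ t, |μ.real {ω | X ω ≤ t} - μ.real {ω | Y ω ≤ t}| ≤ c) : dK μ X Y ≤ c :=
  ciSup_le h

lemma measureReal_setOf_le_eq_cdf {N : Ω → ℝ} {ν : Measure ℝ} [IsProbabilityMeasure ν]
    (hN : μ.map N = ν) (t : ℝ) : μ.real {ω | N ω ≤ t} = cdf ν t := by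
  have hNm : AEMeasurable N μ := aemeasurable_of_map_neZero (by rw [hN]; infer_instance)
  rw [cdf_eq_real, ← hN, map_measureReal_apply_of_aemeasurable hNm measurableSet_Iic]
  rfl

lemma measureReal_abs_ge_le_variance_div_sq [IsFiniteMeasure μ] {Y : Ω → ℝ} (hY : MemLp Y 2 μ)
    (hY0 : μ[Y] = 0) {ε : ℝ} (hε : 0 < ε) :
    μ.real {ω | ε ≤ |Y ω|} ≤ variance Y μ / ε ^ 2 := by
  have h := meas_ge_le_variance_div_sq hY hε
  simp only [hY0, sub_zero] at h
  exact ENNReal.toReal_le_of_le_ofReal (div_nonneg (variance_nonneg Y μ) (sq_nonneg ε)) h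

lemma abs_measureReal_add_le_sub_le [IsFiniteMeasure μ] {X Y : Ω → ℝ} {G : ℝ → ℝ} {D ε η : ℝ}
    (hD : ∀ s, |μ.real {ω | X ω ≤ s} - G s| ≤ D) (hG : ∀ s, G (s + ε) ≤ G s + η) (t : ℝ) :
    |μ.real {ω | X ω + Y ω ≤ t} - G t| ≤ D + μ.real {ω | ε ≤ |Y ω|} + η := by
  have upper : μ.real {ω | X ω + Y ω ≤ t}
      ≤ μ.real {ω | X ω ≤ t + ε} + μ.real {ω | ε ≤ |Y ω|} := by
    refine (measureReal_mono fun ω (hω : X ω + Y ω ≤ t) => ?_).trans (measureReal_union_le _ _)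
    by_cases hY : ε ≤ |Y ω|
    · exact Or.inr hY
    · exact Or.inl (show X ω ≤ t + ε by linarith [neg_abs_le (Y ω)])
  have lower : μ.real {ω | X ω ≤ t - ε}
      ≤ μ.real {ω | X ω + Y ω ≤ t} + μ.real {ω | ε ≤ |Y ω|} := by
    refine (measureReal_mono fun ω (hω : X ω ≤ t - ε) => ?_).trans (measureReal_union_le _ _)
    by_cases hY : ε ≤ |Y ω|
    · exact Or.inr hY
    · exact Or.inl (show X ω + Y ω ≤ t by linarith [le_abs_self (Y ω)])
  have hG' := hG (t - ε)
  rw [sub_add_cancel] at hG'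
  rw [abs_sub_le_iff]
  constructor
  · linarith [(abs_sub_le_iff.1 (hD (t + ε))).1, hG t]
  · linarith [(abs_sub_le_iff.1 (hD (t - ε))).2]

end KolmogorovDistance

section Gaussian

lemma cdf_gaussianReal_sub_le_of_pdf_le {m : ℝ} {v : NNReal} (hv : v ≠ 0) {a b C : ℝ}
    (hab : a ≤ b) (hC : ∀ x ∈ Ioc a b, gaussianPDFReal m v x ≤ C) :
    cdf (gaussianReal m v) b - cdf (gaussianReal m v) a ≤ C * (b - a) := by
  have hIoc : cdf (gaussianReal m v) b - cdf (gaussianReal m v) a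
      = ∫ x in Ioc a b, gaussianPDFReal m v x := by
    have h := gaussianReal_apply_eq_integral m hv (Ioc a b)
    rw [← measure_cdf (gaussianReal m v), StieltjesFunction.measure_Ioc] at h
    rwa [ENNReal.ofReal_eq_ofReal_iff (sub_nonneg.2 (monotone_cdf _ hab))
      (setIntegral_nonneg measurableSet_Ioc fun x _ => gaussianPDFReal_nonneg m v x)] at h
  rw [hIoc, ← volume_real_Ioc_of_le hab]
  refine (le_abs_self _).trans ?_
  exact norm_setIntegral_le_of_norm_le_const (μ := volume) measure_Ioc_lt_top
    fun x hx => by rw [Real.norm_of_nonneg (gaussianPDFReal_nonneg m v x)]; exact hC x hx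

lemma gaussianPDFReal_zero_one (x : ℝ) :
    gaussianPDFReal 0 1 x = (√(2 * π))⁻¹ * exp (-x ^ 2 / 2) := by
  simp [gaussianPDFReal]

lemma inv_sqrt_two_mul_pi_le : (√(2 * π))⁻¹ ≤ 2 / 5 := by
  have h : (5 / 2 : ℝ) ≤ √(2 * π) :=
    Real.le_sqrt_of_sq_le (by nlinarith [Real.pi_gt_d6])
  calc (√(2 * π))⁻¹ ≤ (5 / 2)⁻¹ := inv_anti₀ (by norm_num) h
    _ = 2 / 5 := by norm_num

lemma gaussianPDFReal_zero_one_le_of_abs_le {t x : ℝ} (h : |t| ≤ |x|) :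
    gaussianPDFReal 0 1 x ≤ gaussianPDFReal 0 1 t := by
  rw [gaussianPDFReal_zero_one, gaussianPDFReal_zero_one]
  have hsq : t ^ 2 ≤ x ^ 2 := sq_le_sq.2 h
  gcongr

lemma abs_mul_gaussianPDFReal_zero_one_le (t : ℝ) : |t| * gaussianPDFReal 0 1 t ≤ 2 / 5 := by
  have hexp : |t| * exp (-t ^ 2 / 2) ≤ 1 := by
    have h1 : t ^ 2 / 2 + 1 ≤ exp (t ^ 2 / 2) := add_one_le_exp _
    rw [neg_div, exp_neg, ← div_eq_mul_inv, div_le_one (exp_pos _)]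
    nlinarith [sq_abs t, sq_nonneg (|t| - 1)]
  rw [gaussianPDFReal_zero_one]
  calc |t| * ((√(2 * π))⁻¹ * exp (-t ^ 2 / 2))
        = (√(2 * π))⁻¹ * (|t| * exp (-t ^ 2 / 2)) := by ring
    _ ≤ 2 / 5 * 1 := by gcongr; exact inv_sqrt_two_mul_pi_le
    _ = 2 / 5 := mul_one _

lemma cdf_stdGaussian_sub_le {a b : ℝ} (hab : a ≤ b) : Φ b - Φ a ≤ 2 / 5 * (b - a) := by
  refine cdf_gaussianReal_sub_le_of_pdf_le one_ne_zero hab fun x _ => ?_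
  calc gaussianPDFReal 0 1 x ≤ gaussianPDFReal 0 1 0 :=
        gaussianPDFReal_zero_one_le_of_abs_le (by simp)
    _ ≤ 2 / 5 := by simpa [gaussianPDFReal_zero_one] using inv_sqrt_two_mul_pi_le

lemma abs_cdf_stdGaussian_div_sub_le {σ : ℝ} (hσ0 : 0 < σ) (hσ1 : σ ≤ 1) (t : ℝ) :
    |Φ (t / σ) - Φ t| ≤ 2 / 5 * ((1 - σ) / σ) := by
  have key : ∀ {a b : ℝ}, a ≤ b → (∀ x ∈ Ioc a b, |t| ≤ |x|) → b - a = |t| * ((1 - σ) / σ) →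
      Φ b - Φ a ≤ 2 / 5 * ((1 - σ) / σ) := by
    intro a b hab hx hlen
    calc Φ b - Φ a ≤ gaussianPDFReal 0 1 t * (b - a) :=
          cdf_gaussianReal_sub_le_of_pdf_le one_ne_zero hab
            fun x hx' => gaussianPDFReal_zero_one_le_of_abs_le (hx x hx')
      _ = |t| * gaussianPDFReal 0 1 t * ((1 - σ) / σ) := by rw [hlen]; ring
      _ ≤ 2 / 5 * ((1 - σ) / σ) := by gcongr; exact abs_mul_gaussianPDFReal_zero_one_le t
  rcases le_total 0 t with ht | ht
  · have htσ : t ≤ t / σ := le_div_self ht hσ0 hσ1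
    rw [abs_of_nonneg (sub_nonneg.2 (monotone_cdf _ htσ))]
    refine key htσ (fun x hx => ?_) ?_
    · rw [abs_of_nonneg ht, abs_of_pos (ht.trans_lt hx.1)]; exact hx.1.le
    · rw [abs_of_nonneg ht]; field_simp
  · have htσ : t / σ ≤ t := by rw [div_le_iff₀ hσ0]; nlinarith
    rw [abs_sub_comm, abs_of_nonneg (sub_nonneg.2 (monotone_cdf _ htσ))]
    refine key htσ (fun x hx => ?_) ?_
    · rw [abs_of_nonpos ht, abs_of_nonpos (hx.2.trans ht)]; linarith [hx.2]
    · rw [abs_of_nonpos ht]; field_simp; ring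

lemma cdf_stdGaussian_div_add_le {σ ε : ℝ} (hσ0 : 0 < σ) (hε : 0 ≤ ε) (s : ℝ) :
    Φ ((s + ε) / σ) ≤ Φ (s / σ) + 2 / 5 * (ε / σ) := by
  have h := cdf_stdGaussian_sub_le (div_le_div_of_nonneg_right (le_add_of_nonneg_right hε) hσ0.le :
    s / σ ≤ (s + ε) / σ)
  rw [add_div, add_sub_cancel_left] at h
  rw [add_div]
  linarith

end Gaussian

lemma le_add_three_mul_of_forall_pos_le {c D a σ : ℝ} (ha0 : 0 ≤ a) (ha : a ≤ 1 / 3)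
    (hσ0 : 0 < σ) (hσ : σ ^ 2 = 1 - a ^ 3)
    (h : ∀ ε > 0, c ≤ D + a ^ 3 / ε ^ 2 + 2 / 5 * (ε / σ) + 2 / 5 * ((1 - σ) / σ)) :
    c ≤ D + 3 * a := by
  have ha3 : a ^ 3 ≤ a / 9 := by nlinarith [mul_nonneg ha0 ha0]
  have hσ9 : 9 / 10 ≤ σ := by nlinarith
  have hσ1 : 1 - σ ≤ a / 9 := by nlinarith
  refine le_of_forall_pos_le_add fun δ hδ => ?_
  -- take `ε = a + δ`
  have hε : a ^ 3 / (a + δ) ^ 2 ≤ a :=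
    div_le_of_le_mul₀ (by positivity) ha0 (by nlinarith [mul_nonneg ha0 hδ.le])
  have hσinv : 1 / σ ≤ 10 / 9 := by rw [div_le_iff₀ hσ0]; linarith
  have h1 : (a + δ) / σ ≤ (a + δ) * (10 / 9) := by
    rw [div_eq_mul_one_div]; gcongr
  have h2 : (1 - σ) / σ ≤ a / 9 * (10 / 9) := by
    rw [div_eq_mul_one_div]; gcongr
  linarith [h (a + δ) (by positivity)]

theorem kolmogorov_uncorrelated_pair_general
    {Ω : Type*} [MeasurableSpace Ω] (μ : Measure Ω) [IsProbabilityMeasure μ]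
    (X Y N : Ω → ℝ)
    (hY2 : MemLp Y 2 μ)
    (hY0 : ∫ ω, Y ω ∂μ = 0)
    (hvar : variance X μ + variance Y μ = 1) (hXpos : 0 < variance X μ)
    (hN : Measure.map N μ = gaussianReal 0 1) :
    dK μ (fun ω => X ω + Y ω) N
      ≤ dK μ (fun ω => X ω / Real.sqrt (variance X μ)) N
        + 3 * (variance Y μ) ^ ((1 : ℝ) / 3) := by
  set σ := √(variance X μ)
  set D := dK μ (fun ω => X ω / σ) N
  set a := variance Y μ ^ ((1 : ℝ) / 3)
  have hσ0 : 0 < σ := sqrt_pos.2 hXpos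
  have hσ1 : σ ≤ 1 := sqrt_le_one.2 (by linarith [variance_nonneg Y μ])
  have ha3 : a ^ 3 = variance Y μ := by
    rw [← rpow_natCast, ← rpow_mul (variance_nonneg Y μ)]; norm_num
  have hX : ∀ s, |μ.real {ω | X ω ≤ s} - Φ (s / σ)| ≤ D := fun s => by
    simpa only [div_le_div_iff_of_pos_right hσ0, measureReal_setOf_le_eq_cdf hN]
      using abs_sub_le_dK (μ := μ) (fun ω => X ω / σ) N (s / σ)
  refine dK_le fun t => ?_
  rcases le_or_gt a (1 / 3) with ha | ha
  · rw [measureReal_setOf_le_eq_cdf hN]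
    refine le_add_three_mul_of_forall_pos_le (rpow_nonneg (variance_nonneg Y μ) _) ha hσ0 ?_
      fun ε hε => ?_
    · rw [sq_sqrt hXpos.le, ha3]; linarith
    calc _ ≤ |μ.real {ω | X ω + Y ω ≤ t} - Φ (t / σ)| + |Φ (t / σ) - Φ t| := abs_sub_le _ _ _
      _ ≤ (D + μ.real {ω | ε ≤ |Y ω|} + 2 / 5 * (ε / σ)) + 2 / 5 * ((1 - σ) / σ) := by
        gcongr
        · exact abs_measureReal_add_le_sub_le (G := fun s => Φ (s / σ)) hX
            (cdf_stdGaussian_div_add_le hσ0 hε.le) t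
        · exact abs_cdf_stdGaussian_div_sub_le hσ0 hσ1 t
      _ ≤ D + a ^ 3 / ε ^ 2 + 2 / 5 * (ε / σ) + 2 / 5 * ((1 - σ) / σ) := by
        rw [ha3]; gcongr; exact measureReal_abs_ge_le_variance_div_sq hY2 hY0 hε
  · linarith [abs_measureReal_sub_le_one (μ := μ) {ω | X ω + Y ω ≤ t} {ω | N ω ≤ t},
      dK_nonneg μ (fun ω => X ω / σ) N]

theorem kolmogorov_uncorrelated_pair
    {Ω : Type*} [MeasurableSpace Ω] (μ : Measure Ω) [IsProbabilityMeasure μ]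
    (X Y N : Ω → ℝ)
    (hX2 : MemLp X 2 μ) (hY2 : MemLp Y 2 μ)
    (hX0 : ∫ ω, X ω ∂μ = 0) (hY0 : ∫ ω, Y ω ∂μ = 0)
    (huncorr : ∫ ω, X ω * Y ω ∂μ = 0)
    (hvar : variance X μ + variance Y μ = 1) (hXpos : 0 < variance X μ)
    (hN : Measure.map N μ = gaussianReal 0 1) :
    dK μ (fun ω => X ω + Y ω) N
      ≤ dK μ (fun ω => X ω / Real.sqrt (variance X μ)) N
        + 3 * (variance Y μ) ^ ((1 : ℝ) / 3) :=
  kolmogorov_uncorrelated_pair_general μ X Y N hY2 hY0 hvar hXpos hN
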